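/- arXiv:2106.00846 — 2 statements merged into one kernel-verified Lean document; each statement's English description precedes it below -/
import Mathlib

section
/- For a > 0 and Υ > 0, the integral ∫₀^∞ exp(-z/Υ) · exp(-a/z) · (a/z²) dz equals 2√(a/Υ) · K₁(2√(a/Υ)), where K₁ is the modified Bessel function of the second kind of order 1. -/
open MeasureTheory Real Set

/-- The modified Bessel function of the second kind of order `ν`, for `x > 0`:
`K_ν(x) = ∫₀^∞ exp (-x cosh t) * cosh (ν t) dt`. -/
noncomputable def besselK (ν x : ℝ) : ℝ :=
  ∫ t in Ioi (0 : ℝ), exp (-x * cosh t) * cosh (ν * t)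

lemma two_abs_le_aux {b : ℝ} (hb : 0 < b) (t : ℝ) :
    2 * |t| ≤ 8 / b + b * Real.cosh t := by
  have h0 : (0:ℝ) ≤ |t| := abs_nonneg t
  have h1 : 1 + |t| / 2 ≤ Real.exp (|t| / 2) := by
    have := Real.add_one_le_exp (|t| / 2); linarith
  have h2 : Real.exp |t| = Real.exp (|t| / 2) * Real.exp (|t| / 2) := by
    rw [← Real.exp_add]; ring_nf
  have h3 : Real.exp |t| ≤ 2 * Real.cosh t := by
    rw [← Real.cosh_abs, Real.cosh_eq]
    have := (Real.exp_pos (-|t|)).le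
    linarith
  have h4 : t ^ 2 ≤ 8 * Real.cosh t := by
    nlinarith [sq_abs t]
  have h5 : 2 * |t| * b ≤ 8 + b * (b * Real.cosh t) := by
    nlinarith [sq_nonneg (b * |t| - 8), mul_le_mul_of_nonneg_left h4 (sq_nonneg b), sq_abs t]
  have h7 : (8 + b * (b * Real.cosh t)) / b = 8 / b + b * Real.cosh t := by
    field_simp
  calc 2 * |t| = 2 * |t| * b / b := by field_simp
    _ ≤ (8 + b * (b * Real.cosh t)) / b := by gcongr
    _ = 8 / b + b * Real.cosh t := h7

lemma integrableOn_aux_pos {b : ℝ} (hb : 0 < b) :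
    IntegrableOn (fun t : ℝ => Real.exp (-b * Real.cosh t) * Real.exp t) (Ioi 0) := by
  have hcont : Continuous fun t : ℝ => Real.exp (-b * Real.cosh t) * Real.exp t := by
    continuity
  refine Integrable.mono ((exp_neg_integrableOn_Ioi 0 one_pos).const_mul (Real.exp (8 / b)))
    hcont.aestronglyMeasurable.restrict ?_
  filter_upwards [ae_restrict_mem measurableSet_Ioi] with t ht
  rw [Real.norm_eq_abs, Real.norm_eq_abs, abs_of_pos (by positivity), abs_of_pos (by positivity),
    ← Real.exp_add, ← Real.exp_add]
  apply Real.exp_le_exp.mpr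
  have h := two_abs_le_aux hb t
  rw [abs_of_pos (mem_Ioi.mp ht)] at h
  linarith

lemma integrableOn_aux_neg {b : ℝ} (hb : 0 < b) :
    IntegrableOn (fun t : ℝ => Real.exp (-b * Real.cosh t) * Real.exp (-t)) (Ioi 0) := by
  have hcont : Continuous fun t : ℝ => Real.exp (-b * Real.cosh t) * Real.exp (-t) := by
    continuity
  refine Integrable.mono (exp_neg_integrableOn_Ioi 0 one_pos)
    hcont.aestronglyMeasurable.restrict ?_
  filter_upwards [ae_restrict_mem measurableSet_Ioi] with t _
  rw [Real.norm_eq_abs, Real.norm_eq_abs, abs_of_pos (by positivity), abs_of_pos (by positivity),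
    ← Real.exp_add]
  apply Real.exp_le_exp.mpr
  have h : (1:ℝ) ≤ Real.cosh t := Real.one_le_cosh t
  nlinarith

lemma integrableOn_aux_Iic {b : ℝ} (hb : 0 < b) :
    IntegrableOn (fun t : ℝ => Real.exp (-b * Real.cosh t) * Real.exp (-t)) (Iic 0) := by
  have hcont : Continuous fun t : ℝ => Real.exp (-b * Real.cosh t) * Real.exp (-t) := by
    continuity
  refine Integrable.mono ((integrableOn_exp_Iic 0).const_mul (Real.exp (8 / b)))
    hcont.aestronglyMeasurable.restrict ?_
  filter_upwards [ae_restrict_mem measurableSet_Iic] with t ht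
  rw [Real.norm_eq_abs, Real.norm_eq_abs, abs_of_pos (by positivity), abs_of_pos (by positivity),
    ← Real.exp_add, ← Real.exp_add]
  apply Real.exp_le_exp.mpr
  have h := two_abs_le_aux hb t
  rw [abs_of_nonpos (mem_Iic.mp ht)] at h
  linarith

/-- For `a, Υ > 0`,
`∫₀^∞ exp (-z/Υ) * exp (-a/z) * (a/z²) dz = 2√(a/Υ) * K₁(2√(a/Υ))`. -/
theorem integral_eq_besselK_one (a Υ : ℝ) (ha : 0 < a) (hΥ : 0 < Υ) :
    ∫ z in Ioi (0 : ℝ), exp (-z / Υ) * exp (-a / z) * (a / z ^ 2)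
      = 2 * Real.sqrt (a / Υ) * besselK 1 (2 * Real.sqrt (a / Υ)) := by
  set r : ℝ := Real.sqrt (a / Υ) with hrdef
  have hr0 : 0 < r := Real.sqrt_pos.mpr (div_pos ha hΥ)
  have hr2 : r * r = a / Υ := Real.mul_self_sqrt (div_pos ha hΥ).le
  have ha' : a = r * r * Υ := by
    rw [hr2]; field_simp
  set c : ℝ := r * Υ with hcdef
  have hc0 : 0 < c := mul_pos hr0 hΥ
  set b : ℝ := 2 * r with hbdef
  have hb0 : 0 < b := by positivity
  -- change of variables z = c * exp t
  have hderiv : ∀ t ∈ (univ : Set ℝ),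
      HasDerivWithinAt (fun t : ℝ => c * Real.exp t) (c * Real.exp t) univ t :=
    fun t _ => ((Real.hasDerivAt_exp t).const_mul c).hasDerivWithinAt
  have hinj : InjOn (fun t : ℝ => c * Real.exp t) univ := by
    intro x _ y _ h
    exact Real.exp_injective (mul_left_cancel₀ hc0.ne' h)
  have himg : (fun t : ℝ => c * Real.exp t) '' univ = Ioi (0:ℝ) := by
    rw [image_univ]
    ext z
    simp only [mem_range, mem_Ioi]
    constructor
    · rintro ⟨t, rfl⟩; positivity
    · intro hz
      refine ⟨Real.log (z / c), ?_⟩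
      rw [Real.exp_log (div_pos hz hc0)]
      field_simp
  have key := integral_image_eq_integral_abs_deriv_smul MeasurableSet.univ hderiv hinj
      (fun z => exp (-z / Υ) * exp (-a / z) * (a / z ^ 2))
  rw [himg, Measure.restrict_univ] at key
  rw [key]
  -- pointwise simplification of the transformed integrand
  have hpt : ∀ t : ℝ,
      |c * Real.exp t| • (exp (-(c * Real.exp t) / Υ) * exp (-a / (c * Real.exp t))
        * (a / (c * Real.exp t) ^ 2))
      = r * (exp (-b * Real.cosh t) * exp (-t)) := by
    intro t
    have he : (0:ℝ) < Real.exp t := Real.exp_pos t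
    have e1 : -(c * Real.exp t) / Υ = -(r * Real.exp t) := by
      rw [hcdef]; field_simp
    have e2 : -a / (c * Real.exp t) = -(r * Real.exp (-t)) := by
      rw [ha', hcdef, Real.exp_neg]
      field_simp
    have e3 : -b * Real.cosh t = -(r * Real.exp t) + -(r * Real.exp (-t)) := by
      rw [hbdef, Real.cosh_eq]; ring
    have e4 : c * Real.exp t * (a / (c * Real.exp t) ^ 2) = r * Real.exp (-t) := by
      rw [ha', hcdef, Real.exp_neg]
      field_simp
    rw [abs_of_pos (mul_pos hc0 he), smul_eq_mul, e1, e2, e3, Real.exp_add]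
    calc c * Real.exp t * (exp (-(r * Real.exp t)) * exp (-(r * Real.exp (-t)))
          * (a / (c * Real.exp t) ^ 2))
        = exp (-(r * Real.exp t)) * exp (-(r * Real.exp (-t)))
          * (c * Real.exp t * (a / (c * Real.exp t) ^ 2)) := by ring
      _ = exp (-(r * Real.exp t)) * exp (-(r * Real.exp (-t))) * (r * Real.exp (-t)) := by
          rw [e4]
      _ = r * (exp (-(r * Real.exp t)) * exp (-(r * Real.exp (-t))) * Real.exp (-t)) := by ring
  rw [integral_congr_ae (Filter.Eventually.of_forall hpt), integral_const_mul]
  -- now compute ∫ t, exp (-b cosh t) * exp (-t)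
  have hI1 := integrableOn_aux_neg hb0
  have hI2 := integrableOn_aux_pos hb0
  have hIic := integrableOn_aux_Iic hb0
  have hsplit : (∫ t : ℝ, Real.exp (-b * Real.cosh t) * Real.exp (-t))
      = (∫ t in Iic (0:ℝ), Real.exp (-b * Real.cosh t) * Real.exp (-t))
        + ∫ t in Ioi (0:ℝ), Real.exp (-b * Real.cosh t) * Real.exp (-t) :=
    (intervalIntegral.integral_Iic_add_Ioi hIic hI1).symm
  have hneg : (∫ t in Iic (0:ℝ), Real.exp (-b * Real.cosh t) * Real.exp (-t))
      = ∫ t in Ioi (0:ℝ), Real.exp (-b * Real.cosh t) * Real.exp t := by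
    have := integral_comp_neg_Ioi (0:ℝ) (fun t => Real.exp (-b * Real.cosh t) * Real.exp (-t))
    simp only [Real.cosh_neg, neg_neg, neg_zero] at this
    exact this.symm
  have hadd : (∫ t in Ioi (0:ℝ), Real.exp (-b * Real.cosh t) * Real.exp t)
      + (∫ t in Ioi (0:ℝ), Real.exp (-b * Real.cosh t) * Real.exp (-t))
      = ∫ t in Ioi (0:ℝ), 2 * (Real.exp (-b * Real.cosh t) * Real.cosh (1 * t)) := by
    rw [← integral_add hI2 hI1]
    refine setIntegral_congr_fun measurableSet_Ioi fun t _ => ?_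
    rw [one_mul, Real.cosh_eq]
    ring
  rw [hsplit, hneg, hadd, integral_const_mul]
  rw [besselK]
  ring
end

section
/- For Ψ > 0, the function Ψ ↦ 2Ψ·K₁(2Ψ) is strictly decreasing, takes values in (0,1), tends to 1 as Ψ → 0⁺ and to 0 as Ψ → ∞; hence the exact outage probability P_out = 1 - e^{-c}·2Ψ·K₁(2Ψ) lies in (1 - e^{-c}, 1) and is strictly increasing in Ψ. -/
open MeasureTheory Real Set Filter

noncomputable def F (x : ℝ) : ℝ := ∫ s in Ioi (0 : ℝ), exp (-Real.sqrt (x ^ 2 + s ^ 2))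

lemma sqrt_ge_self (x s : ℝ) (hs : 0 ≤ s) : s ≤ Real.sqrt (x ^ 2 + s ^ 2) := by
  nlinarith [Real.sq_sqrt (by positivity : (0:ℝ) ≤ x ^ 2 + s ^ 2),
    Real.sqrt_nonneg (x ^ 2 + s ^ 2)]

lemma integrableF (x : ℝ) :
    IntegrableOn (fun s => exp (-Real.sqrt (x ^ 2 + s ^ 2))) (Ioi (0:ℝ)) := by
  have h1 : IntegrableOn (fun s : ℝ => exp (-(1:ℝ) * s)) (Ioi (0:ℝ)) :=
    exp_neg_integrableOn_Ioi 0 one_pos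
  refine Integrable.mono h1 ?_ ?_
  · exact ((continuous_exp.comp (by continuity)).aestronglyMeasurable)
  · filter_upwards [ae_restrict_mem measurableSet_Ioi] with s hs
    rw [norm_of_nonneg (exp_nonneg _), norm_of_nonneg (exp_nonneg _)]
    apply exp_le_exp.2
    simp only [neg_mul, one_mul, neg_le_neg_iff]
    exact sqrt_ge_self x s (le_of_lt hs)

lemma key (x : ℝ) (hx : 0 < x) : x * besselK 1 x = F x := by
  have himg : Real.sinh '' Ioi (0:ℝ) = Ioi (0:ℝ) := by
    ext u
    constructor
    · rintro ⟨t, ht, rfl⟩; exact Real.sinh_pos_iff.2 ht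
    · intro hu; exact ⟨Real.arsinh u, Real.arsinh_pos_iff.2 hu, Real.sinh_arsinh u⟩
  have hderiv : ∀ t ∈ Ioi (0:ℝ), HasDerivWithinAt Real.sinh (Real.cosh t) (Ioi 0) t :=
    fun t _ => (Real.hasDerivAt_sinh t).hasDerivWithinAt
  have hinj : InjOn Real.sinh (Ioi (0:ℝ)) := Real.sinh_injective.injOn
  have step1 : besselK 1 x = ∫ u in Ioi (0:ℝ), exp (-x * Real.sqrt (1 + u ^ 2)) := by
    rw [besselK]
    symm
    conv_lhs => rw [← himg]
    rw [ integral_image_eq_integral_abs_deriv_smul measurableSet_Ioi hderiv hinj]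
    apply setIntegral_congr_fun measurableSet_Ioi
    intro t _
    have hc : Real.sqrt (1 + Real.sinh t ^ 2) = Real.cosh t := by
      rw [← Real.cosh_sq']
      exact Real.sqrt_sq (Real.cosh_pos t).le
    simp only []
    rw [hc, abs_of_pos (Real.cosh_pos t), smul_eq_mul, one_mul, mul_comm]
  have step2 : ∫ u in Ioi (0:ℝ), exp (-x * Real.sqrt (1 + u ^ 2))
      = x⁻¹ * F x := by
    have := integral_comp_mul_left_Ioi
      (fun s => exp (-Real.sqrt (x ^ 2 + s ^ 2))) 0 hx
    rw [mul_zero] at this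
    calc ∫ u in Ioi (0:ℝ), exp (-x * Real.sqrt (1 + u ^ 2))
        = ∫ u in Ioi (0:ℝ), (fun s => exp (-Real.sqrt (x ^ 2 + s ^ 2))) (x * u) := by
          apply setIntegral_congr_fun measurableSet_Ioi
          intro u hu
          simp only
          congr 1
          have h2 : x ^ 2 + (x * u) ^ 2 = x ^ 2 * (1 + u ^ 2) := by ring
          rw [h2, Real.sqrt_mul (by positivity), Real.sqrt_sq hx.le, neg_mul]
      _ = x⁻¹ * F x := by rw [this, smul_eq_mul, F]
  rw [step1, step2, ← mul_assoc, mul_inv_cancel₀ hx.ne', one_mul]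

lemma int_lt {g h : ℝ → ℝ} (hg : IntegrableOn g (Ioi (0:ℝ)))
    (hh : IntegrableOn h (Ioi (0:ℝ))) (hlt : ∀ s ∈ Ioi (0:ℝ), g s < h s) :
    (∫ s in Ioi (0:ℝ), g s) < ∫ s in Ioi (0:ℝ), h s := by
  have hsub : IntegrableOn (fun s => h s - g s) (Ioi (0:ℝ)) := hh.sub hg
  have hpos : 0 < ∫ s in Ioi (0:ℝ), (h s - g s) := by
    rw [setIntegral_pos_iff_support_of_nonneg_ae ?_ hsub]
    · have hsup : Ioi (0:ℝ) ⊆ Function.support (fun s => h s - g s) ∩ Ioi 0 := by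
        intro s hs
        exact ⟨by simp only [Function.mem_support]; linarith [hlt s hs], hs⟩
      calc (0:ENNReal) < volume (Ioi (0:ℝ)) := by simp [Real.volume_Ioi]
        _ ≤ _ := measure_mono hsup
    · filter_upwards [ae_restrict_mem measurableSet_Ioi] with s hs
      simp only [Pi.zero_apply]
      linarith [hlt s hs]
  have := integral_sub hh hg
  linarith [this ▸ hpos]

lemma F_strictAnti : StrictAntiOn F (Ioi (0:ℝ)) := by
  intro x hx y hy hxy
  apply int_lt (integrableF y) (integrableF x)
  intro s _
  apply exp_lt_exp.2
  apply neg_lt_neg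
  apply Real.sqrt_lt_sqrt (by positivity)
  have : (0:ℝ) < x := hx
  nlinarith

lemma F_lt_one (x : ℝ) (hx : 0 < x) : F x < 1 := by
  rw [F, ← integral_exp_neg_Ioi_zero]
  apply int_lt (integrableF x) (exp_neg_integrableOn_Ioi 0 one_pos |>.congr_fun
    (fun s _ => by simp only [neg_one_mul]) measurableSet_Ioi)
  intro s hs
  apply exp_lt_exp.2
  apply neg_lt_neg
  calc s = Real.sqrt (s ^ 2) := (Real.sqrt_sq (le_of_lt hs)).symm
    _ < Real.sqrt (x ^ 2 + s ^ 2) := Real.sqrt_lt_sqrt (by positivity) (by nlinarith)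

lemma exp_neg_le_F (x : ℝ) (hx : 0 ≤ x) : exp (-x) ≤ F x := by
  have h1 : IntegrableOn (fun s : ℝ => exp (-x) * exp (-s)) (Ioi (0:ℝ)) :=
    ((exp_neg_integrableOn_Ioi 0 one_pos).congr_fun
      (fun s _ => by rw [neg_one_mul]) measurableSet_Ioi).const_mul _
  have h2 : (∫ s in Ioi (0:ℝ), exp (-x) * exp (-s)) = exp (-x) := by
    rw [integral_const_mul, integral_exp_neg_Ioi_zero, mul_one]
  rw [← h2, F]
  apply setIntegral_mono_on h1 (integrableF x) measurableSet_Ioi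
  intro s hs
  rw [← Real.exp_add]
  apply exp_le_exp.2
  have hs' : (0:ℝ) ≤ s := le_of_lt hs
  have : Real.sqrt (x ^ 2 + s ^ 2) ≤ x + s := by
    rw [show x + s = Real.sqrt ((x+s)^2) from (Real.sqrt_sq (by positivity)).symm]
    exact Real.sqrt_le_sqrt (by nlinarith)
  linarith

lemma F_pos (x : ℝ) : 0 < F x := by
  have : (0:ℝ) = ∫ s in Ioi (0:ℝ), (0:ℝ) := by simp
  rw [this, F]
  exact int_lt (integrable_zero _ _ _).integrableOn (integrableF x)
    (fun s _ => exp_pos _)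

lemma F_le (x : ℝ) (hx : 0 ≤ x) : F x ≤ 2 * exp (-(x/2)) := by
  have h2 : (∫ s in Ioi (0:ℝ), exp (-(x/2)) * exp (-((1:ℝ)/2 * s)))
      = exp (-(x/2)) * 2 := by
    rw [integral_const_mul]
    have := integral_comp_mul_left_Ioi (fun u => exp (-u)) 0 (by norm_num : (0:ℝ) < 1/2)
    simp only [mul_zero, smul_eq_mul] at this
    rw [this, integral_exp_neg_Ioi_zero]
    norm_num
  have h1 : IntegrableOn (fun s : ℝ => exp (-(x/2)) * exp (-((1:ℝ)/2 * s))) (Ioi (0:ℝ)) :=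
    ((exp_neg_integrableOn_Ioi 0 (by norm_num : (0:ℝ) < 1/2)).congr_fun
      (fun s _ => by ring_nf) measurableSet_Ioi).const_mul _
  rw [show 2 * exp (-(x/2)) = exp (-(x/2)) * 2 by ring, ← h2, F]
  apply setIntegral_mono_on (integrableF x) h1 measurableSet_Ioi
  intro s hs
  rw [← Real.exp_add]
  apply exp_le_exp.2
  have hs' : (0:ℝ) ≤ s := le_of_lt hs
  have : (x + s) / 2 ≤ Real.sqrt (x ^ 2 + s ^ 2) := by
    rw [show (x+s)/2 = Real.sqrt (((x+s)/2)^2) from (Real.sqrt_sq (by positivity)).symm]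
    exact Real.sqrt_le_sqrt (by nlinarith)
  linarith

lemma F_tendsto_top : Tendsto F atTop (nhds 0) := by
  have h1 : Tendsto (fun x : ℝ => 2 * exp (-(x/2))) atTop (nhds 0) := by
    have := (Real.tendsto_exp_neg_atTop_nhds_zero.comp
      (tendsto_id.atTop_div_const (by norm_num : (0:ℝ) < 2))).const_mul (2:ℝ)
    simpa using this
  apply tendsto_of_tendsto_of_tendsto_of_le_of_le' tendsto_const_nhds h1
  · filter_upwards with x using (F_pos x).le
  · filter_upwards [eventually_ge_atTop (0:ℝ)] with x hx using F_le x hx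

lemma F_tendsto_zero : Tendsto F (nhdsWithin 0 (Ioi 0)) (nhds 1) := by
  have h1 : Tendsto (fun x : ℝ => exp (-x)) (nhdsWithin 0 (Ioi 0)) (nhds 1) := by
    have : Tendsto (fun x : ℝ => exp (-x)) (nhds 0) (nhds 1) := by
      have := (Real.continuous_exp.comp continuous_neg).tendsto (0:ℝ)
      simpa [Function.comp_def] using this
    exact this.mono_left nhdsWithin_le_nhds
  apply tendsto_of_tendsto_of_tendsto_of_le_of_le' h1 tendsto_const_nhds
  · filter_upwards [self_mem_nhdsWithin] with x hx using exp_neg_le_F x (le_of_lt hx)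
  · filter_upwards [self_mem_nhdsWithin] with x hx using (F_lt_one x hx).le

/-- `Ψ ↦ 2Ψ K₁(2Ψ)` is strictly decreasing on `(0,∞)`, takes values in `(0,1)`,
tends to `1` as `Ψ → 0⁺` and to `0` as `Ψ → ∞`; hence the exact outage probability
`P_out = 1 - e^{-c} · 2Ψ K₁(2Ψ)` lies in `(1 - e^{-c}, 1)` and is strictly
increasing in `Ψ`. -/
theorem besselK_outage_properties (c : ℝ) (hc : 0 ≤ c) :
    StrictAntiOn (fun Ψ : ℝ => 2 * Ψ * besselK 1 (2 * Ψ)) (Ioi 0)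
    ∧ (∀ Ψ : ℝ, 0 < Ψ → 2 * Ψ * besselK 1 (2 * Ψ) ∈ Ioo (0 : ℝ) 1)
    ∧ Tendsto (fun Ψ : ℝ => 2 * Ψ * besselK 1 (2 * Ψ)) (nhdsWithin 0 (Ioi 0)) (nhds 1)
    ∧ Tendsto (fun Ψ : ℝ => 2 * Ψ * besselK 1 (2 * Ψ)) atTop (nhds 0)
    ∧ (∀ Ψ : ℝ, 0 < Ψ →
        1 - exp (-c) * (2 * Ψ * besselK 1 (2 * Ψ)) ∈ Ioo (1 - exp (-c)) 1)
    ∧ StrictMonoOn (fun Ψ : ℝ => 1 - exp (-c) * (2 * Ψ * besselK 1 (2 * Ψ))) (Ioi 0) := by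
  have hGF : ∀ Ψ : ℝ, 0 < Ψ → 2 * Ψ * besselK 1 (2 * Ψ) = F (2 * Ψ) := by
    intro Ψ hΨ
    exact key (2 * Ψ) (by linarith)
  have hanti : StrictAntiOn (fun Ψ : ℝ => 2 * Ψ * besselK 1 (2 * Ψ)) (Ioi 0) := by
    intro a ha b hb hab
    simp only
    rw [hGF a ha, hGF b hb]
    exact F_strictAnti (by simpa using mul_pos two_pos (mem_Ioi.mp ha))
      (by simpa using mul_pos two_pos (lt_trans (mem_Ioi.mp ha) hab)) (by linarith)
  have hmem : ∀ Ψ : ℝ, 0 < Ψ → 2 * Ψ * besselK 1 (2 * Ψ) ∈ Ioo (0 : ℝ) 1 := by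
    intro Ψ hΨ
    rw [hGF Ψ hΨ]
    exact ⟨F_pos _, F_lt_one _ (by linarith)⟩
  have h2 : Tendsto (fun Ψ : ℝ => 2 * Ψ) (nhdsWithin 0 (Ioi 0)) (nhdsWithin 0 (Ioi 0)) := by
    apply tendsto_nhdsWithin_of_tendsto_nhds_of_eventually_within
    · have : Tendsto (fun Ψ : ℝ => 2 * Ψ) (nhds 0) (nhds (2 * 0)) :=
        (continuous_const.mul continuous_id).tendsto (0 : ℝ)
      rw [mul_zero] at this
      exact this.mono_left nhdsWithin_le_nhds
    · filter_upwards [self_mem_nhdsWithin] with x hx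
      exact mul_pos two_pos (mem_Ioi.mp hx)
  have htend0 : Tendsto (fun Ψ : ℝ => 2 * Ψ * besselK 1 (2 * Ψ))
      (nhdsWithin 0 (Ioi 0)) (nhds 1) := by
    apply (F_tendsto_zero.comp h2).congr'
    filter_upwards [self_mem_nhdsWithin] with Ψ hΨ
    exact (hGF Ψ hΨ).symm
  have htendtop : Tendsto (fun Ψ : ℝ => 2 * Ψ * besselK 1 (2 * Ψ)) atTop (nhds 0) := by
    apply (F_tendsto_top.comp (tendsto_id.const_mul_atTop two_pos)).congr'
    filter_upwards [eventually_gt_atTop (0:ℝ)] with Ψ hΨ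
    exact (hGF Ψ hΨ).symm
  refine ⟨hanti, hmem, htend0, htendtop, ?_, ?_⟩
  · intro Ψ hΨ
    obtain ⟨h0, h1⟩ := hmem Ψ hΨ
    have he : 0 < exp (-c) := exp_pos _
    constructor <;> nlinarith
  · intro a ha b hb hab
    have := hanti ha hb hab
    simp only at this ⊢
    have he : 0 < exp (-c) := exp_pos _
    nlinarith
end
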